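/- The two session types extracted from a relative projection at opposite perspectives are dual: for every relative well-formed global type G, distinct participants p, q ∈ part(G), and priority o, the session type ⟨⟨ G↾(p,q) ⟩⟩_{p⟩q}^o equals the dual of ⟨⟨ G↾(p,q) ⟩⟩_{q⟩p}^o. -/
import Mathlib


namespace APCP

/- Session types (Def. "Session Types"): priorities in ℕ ∪ {ω}, modeled as `WithTop ℕ`
    with `⊤` playing the role of ω.  Finite branching `{i : A_i}_{i ∈ I}` is modeled by a
    finite sequence of branches (`SBranches`). -/
mutual
inductive SType : Type where
  | tensor (o : WithTop ℕ) (A B : SType) : SType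
  | par    (o : WithTop ℕ) (A B : SType) : SType
  | sel    (o : WithTop ℕ) (bs : SBranches) : SType
  | bra    (o : WithTop ℕ) (bs : SBranches) : SType
  | unit   : SType
  | mu     (x : ℕ) (A : SType) : SType
  | var    (x : ℕ) : SType

inductive SBranches : Type where
  | nil : SBranches
  | cons (A : SType) (rest : SBranches) : SBranches
end

/- Duality of session types (Def. "Duality"). -/
mutual
def SType.dual : SType → SType
  | .tensor o A B => .par o (SType.dual A) (SType.dual B)
  | .par o A B => .tensor o (SType.dual A) (SType.dual B)
  | .sel o bs => .bra o (SBranches.dual bs)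
  | .bra o bs => .sel o (SBranches.dual bs)
  | .unit => .unit
  | .mu x A => .mu x (SType.dual A)
  | .var x => .var x

def SBranches.dual : SBranches → SBranches
  | .nil => .nil
  | .cons A rest => .cons (SType.dual A) (SBranches.dual rest)
end

/- Lift `↑ᵗ` (Def. "Lift"): add `t` to every priority annotation (with `ω + t = ω`). -/
mutual
def SType.lift (t : ℕ) : SType → SType
  | .tensor o A B => .tensor (o + (t : WithTop ℕ)) (SType.lift t A) (SType.lift t B)
  | .par o A B => .par (o + (t : WithTop ℕ)) (SType.lift t A) (SType.lift t B)
  | .sel o bs => .sel (o + (t : WithTop ℕ)) (SBranches.lift t bs)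
  | .bra o bs => .bra (o + (t : WithTop ℕ)) (SBranches.lift t bs)
  | .unit => .unit
  | .mu x A => .mu x (SType.lift t A)
  | .var x => .var x

def SBranches.lift (t : ℕ) : SBranches → SBranches
  | .nil => .nil
  | .cons A rest => .cons (SType.lift t A) (SBranches.lift t rest)
end

/- Priority of the outermost connective (Def. "Priorities"); `pr • = pr X = ω`. -/
def SType.pr : SType → WithTop ℕ
  | .tensor o _ _ => o
  | .par o _ _ => o
  | .sel o _ => o
  | .bra o _ => o
  | .unit => ⊤
  | .mu _ A => SType.pr A
  | .var _ => ⊤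

/- Highest priority (Def. "Highest Priority"); `max_pr • = max_pr X = 0`. -/
mutual
def SType.maxPr : SType → WithTop ℕ
  | .tensor o A B => max (max (SType.maxPr A) (SType.maxPr B)) o
  | .par o A B => max (max (SType.maxPr A) (SType.maxPr B)) o
  | .sel o bs => max (SBranches.maxPr bs) o
  | .bra o bs => max (SBranches.maxPr bs) o
  | .unit => 0
  | .mu _ A => SType.maxPr A
  | .var _ => 0

def SBranches.maxPr : SBranches → WithTop ℕ
  | .nil => 0
  | .cons A rest => max (SType.maxPr A) (SBranches.maxPr rest)
end

/- Substitution `A[B/X]` of `B` for the free occurrences of recursion variable `x` in `A`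
    (respecting shadowing binders). -/
mutual
def SType.subst (x : ℕ) (B : SType) : SType → SType
  | .tensor o A C => .tensor o (SType.subst x B A) (SType.subst x B C)
  | .par o A C => .par o (SType.subst x B A) (SType.subst x B C)
  | .sel o bs => .sel o (SBranches.subst x B bs)
  | .bra o bs => .bra o (SBranches.subst x B bs)
  | .unit => .unit
  | .mu y A => if y = x then .mu y A else .mu y (SType.subst x B A)
  | .var y => if y = x then B else .var y

def SBranches.subst (x : ℕ) (B : SType) : SBranches → SBranches
  | .nil => .nil
  | .cons A rest => .cons (SType.subst x B A) (SBranches.subst x B rest)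
end

/- Free recursion variables. -/
mutual
def SType.frv : SType → Finset ℕ
  | .tensor _ A B => SType.frv A ∪ SType.frv B
  | .par _ A B => SType.frv A ∪ SType.frv B
  | .sel _ bs => SBranches.frv bs
  | .bra _ bs => SBranches.frv bs
  | .unit => ∅
  | .mu x A => (SType.frv A).erase x
  | .var x => {x}

def SBranches.frv : SBranches → Finset ℕ
  | .nil => ∅
  | .cons A rest => SType.frv A ∪ SBranches.frv rest
end

/- `A` contains at least one connective from `{⊗, ⅋, ⊕, &}`. -/
mutual
def SType.hasConn : SType → Prop
  | .tensor _ _ _ => True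
  | .par _ _ _ => True
  | .sel _ _ => True
  | .bra _ _ => True
  | .unit => False
  | .mu _ A => SType.hasConn A
  | .var _ => False

def SBranches.hasConn : SBranches → Prop
  | .nil => False
  | .cons A rest => SType.hasConn A ∨ SBranches.hasConn rest
end

/- Unfolding (Def. "Unfolding"): `unfoldᵗ (μX.A) = A[(μX.↑ᵗA)/X]`. -/
def SType.unfold (t : ℕ) (x : ℕ) (A : SType) : SType :=
  SType.subst x (.mu x (SType.lift t A)) A

/- Deep unfolding (Def. "Deep Unfolding"), defined by recursion on the sequence of triples
    `(recursion variable, lift, type)`, extending at the tail. -/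
def SType.deepUnfoldAux : SType → List (ℕ × ℕ × SType) → SType
  | A, [] => A
  | A, (x, t, B) :: U =>
      SType.subst x (.mu x (SType.lift t (SType.deepUnfoldAux B U))) (SType.deepUnfoldAux A U)

def SType.deepUnfold (A : SType) (U : List (ℕ × ℕ × SType)) : SType :=
  SType.deepUnfoldAux A U.reverse

end APCP

namespace APCP

/- Message types (Def. "Types"): S ::= !T.S | ?T.S | ⊕{i:S_i} | &{i:S_i} | • ,
   with finite branching modeled by `MBranches`. -/
mutual
inductive MType : Type where
  | out (T S : MType) : MType
  | inp (T S : MType) : MType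
  | sel (bs : MBranches) : MType
  | bra (bs : MBranches) : MType
  | unit : MType
  deriving DecidableEq

inductive MBranches : Type where
  | nil : MBranches
  | cons (S : MType) (rest : MBranches) : MBranches
  deriving DecidableEq
end

/- Global types (Def. "Types"): G ::= p↠q{i⟨S_i⟩.G_i} | μX.G | X | • | skip.G. -/
mutual
inductive GType : Type where
  | comm (s r : ℕ) (bs : GBranches) : GType
  | mu (x : ℕ) (G : GType) : GType
  | var (x : ℕ) : GType
  | done : GType
  | skip (G : GType) : GType
  deriving DecidableEq

inductive GBranches : Type where
  | nil : GBranches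
  | cons (S : MType) (G : GType) (rest : GBranches) : GBranches
  deriving DecidableEq
end

/- Relative types (Def. "Relative Types"):
   R ::= p{i⟨S_i⟩.R_i} | p?r{i.R_i} | p!r{i.R_i} | μX.R | X | • | skip.R. -/
mutual
inductive RType : Type where
  | msg (p : ℕ) (bs : RBranches) : RType
  | depIn (p r : ℕ) (bs : RDBranches) : RType
  | depOut (p r : ℕ) (bs : RDBranches) : RType
  | mu (x : ℕ) (R : RType) : RType
  | var (x : ℕ) : RType
  | done : RType
  | skip (R : RType) : RType
  deriving DecidableEq

inductive RBranches : Type where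
  | nil : RBranches
  | cons (S : MType) (R : RType) (rest : RBranches) : RBranches
  deriving DecidableEq

inductive RDBranches : Type where
  | nil : RDBranches
  | cons (R : RType) (rest : RDBranches) : RDBranches
  deriving DecidableEq
end

end APCP

namespace APCP

/- Participants of a global type (Def. "Participants"). -/
mutual
def GType.part : GType → Finset ℕ
  | .comm s r bs => insert s (insert r (GBranches.part bs))
  | .mu _ G => GType.part G
  | .var _ => ∅
  | .done => ∅
  | .skip G => GType.part G

def GBranches.part : GBranches → Finset ℕ
  | .nil => ∅
  | .cons _ G rest => GType.part G ∪ GBranches.part rest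
end

/- Free recursion variables of a global type. -/
mutual
def GType.frv : GType → Finset ℕ
  | .comm _ _ bs => GBranches.frv bs
  | .mu x G => (GType.frv G).erase x
  | .var x => {x}
  | .done => ∅
  | .skip G => GType.frv G

def GBranches.frv : GBranches → Finset ℕ
  | .nil => ∅
  | .cons _ G rest => GType.frv G ∪ GBranches.frv rest
end

/- Substitution G[H/x] of global type H for the free occurrences of recursion
   variable x in G (respecting shadowing binders). -/
mutual
def GType.subst (x : ℕ) (H : GType) : GType → GType
  | .comm s r bs => .comm s r (GBranches.subst x H bs)
  | .mu y G => if y = x then .mu y G else .mu y (GType.subst x H G)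
  | .var y => if y = x then H else .var y
  | .done => .done
  | .skip G => .skip (GType.subst x H G)

def GBranches.subst (x : ℕ) (H : GType) : GBranches → GBranches
  | .nil => .nil
  | .cons S G rest => .cons S (GType.subst x H G) (GBranches.subst x H rest)
end

/- Participants of a relative type (Def. "Participants of Relative Types"). -/
mutual
def RType.part : RType → Finset ℕ
  | .msg p bs => insert p (RBranches.part bs)
  | .depIn p _ bs => insert p (RDBranches.part bs)
  | .depOut p _ bs => insert p (RDBranches.part bs)
  | .mu _ R => RType.part R
  | .var _ => ∅
  | .done => ∅
  | .skip R => RType.part R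

def RBranches.part : RBranches → Finset ℕ
  | .nil => ∅
  | .cons _ R rest => RType.part R ∪ RBranches.part rest

def RDBranches.part : RDBranches → Finset ℕ
  | .nil => ∅
  | .cons R rest => RType.part R ∪ RDBranches.part rest
end

/- Free recursion variables of a relative type. -/
mutual
def RType.frv : RType → Finset ℕ
  | .msg _ bs => RBranches.frv bs
  | .depIn _ _ bs => RDBranches.frv bs
  | .depOut _ _ bs => RDBranches.frv bs
  | .mu x R => (RType.frv R).erase x
  | .var x => {x}
  | .done => ∅
  | .skip R => RType.frv R

def RBranches.frv : RBranches → Finset ℕ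
  | .nil => ∅
  | .cons _ R rest => RType.frv R ∪ RBranches.frv rest

def RDBranches.frv : RDBranches → Finset ℕ
  | .nil => ∅
  | .cons R rest => RType.frv R ∪ RDBranches.frv rest
end

/- Contractiveness of a relative type on a recursion variable (Def. "Contractive
   Relative Types"): R is contractive on x iff R contains an exchange, or R ends in
   a recursive call on a variable other than x. -/
def RType.contractiveOn (x : ℕ) : RType → Bool
  | .msg _ _ => true
  | .depIn _ _ _ => true
  | .depOut _ _ _ => true
  | .mu _ R => RType.contractiveOn x R
  | .var y => decide (y ≠ x)
  | .done => false
  | .skip R => RType.contractiveOn x R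

/- Packing a list of relative types into dependency branches. -/
def RDBranches.ofList : List RType → RDBranches
  | [] => .nil
  | R :: rs => .cons R (RDBranches.ofList rs)

/- Dependency detection `ddep((p,q), s↠r{i⟨S_i⟩.G_i})` (Fig. "Relative Projection", top),
   applied to the already-projected branches `rs`: if all branches project equally it
   yields a skip; otherwise it yields a dependency when p or q is the sender s or the
   recipient r, and is undefined otherwise. -/
def ddep (p q s r : ℕ) (rs : List RType) : Option RType :=
  match rs with
  | [] => none
  | R :: rest =>
    if rest.all (fun R' => R' = R) then some (.skip R)
    else if p = s then some (.depOut p r (RDBranches.ofList (R :: rest)))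
    else if q = s then some (.depOut q r (RDBranches.ofList (R :: rest)))
    else if p = r then some (.depIn p s (RDBranches.ofList (R :: rest)))
    else if q = r then some (.depIn q s (RDBranches.ofList (R :: rest)))
    else none

/- Relative projection `G ↾ (p,q)` (Def. "Relative Projection"), a partial function. -/
mutual
def GType.rproj (p q : ℕ) : GType → Option RType
  | .comm s r bs =>
      if p = s ∧ q = r then (GBranches.rprojB p q bs).map (fun rbs => RType.msg p rbs)
      else if q = s ∧ p = r then (GBranches.rprojB p q bs).map (fun rbs => RType.msg q rbs)
      else (GBranches.rprojList p q bs).bind (ddep p q s r)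
  | .mu x G =>
      match GType.rproj p q G with
      | none => none
      | some R => if RType.contractiveOn x R then some (.mu x R) else some .done
  | .var x => some (.var x)
  | .done => some .done
  | .skip G => (GType.rproj p q G).map RType.skip

def GBranches.rprojB (p q : ℕ) : GBranches → Option RBranches
  | .nil => some .nil
  | .cons S G rest =>
      match GType.rproj p q G, GBranches.rprojB p q rest with
      | some R, some rs => some (.cons S R rs)
      | _, _ => none

def GBranches.rprojList (p q : ℕ) : GBranches → Option (List RType)
  | .nil => some []
  | .cons _ G rest =>
      match GType.rproj p q G, GBranches.rprojList p q rest with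
      | some R, some rs => some (R :: rs)
      | _, _ => none
end

/- A global type is relative well-formed (Def. "Relative Well-Formedness") when its
   relative projection onto every pair of distinct participants is defined. -/
def GType.RWF (G : GType) : Prop :=
  ∀ p ∈ G.part, ∀ q ∈ G.part, p ≠ q → (GType.rproj p q G).isSome

end APCP

namespace APCP

/- Extraction of a session type from a message type (Def. "From Message Types to
   Session Types"), with a fixed (arbitrary) priority `om` on every connective. -/
mutual
def MType.extract (om : ℕ) : MType → SType
  | .out T S => .tensor (om : WithTop ℕ) (MType.extract om T) (MType.extract om S)
  | .inp T S => .par (om : WithTop ℕ) (MType.extract om T) (MType.extract om S)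
  | .sel bs => .sel (om : WithTop ℕ) (MBranches.extract om bs)
  | .bra bs => .bra (om : WithTop ℕ) (MBranches.extract om bs)
  | .unit => .unit

def MBranches.extract (om : ℕ) : MBranches → SBranches
  | .nil => .nil
  | .cons S rest => .cons (MType.extract om S) (MBranches.extract om rest)
end

/- Extraction `⟨⟨R⟩⟩_{p⟩q}^o` of a session type from a relative type `R` between `p`
   and `q`, at `p`'s perspective, with priority `o` (Def. "From Relative Types to
   Session Types"); `om` is the fixed priority used for message-type payloads. -/
mutual
def RType.extract (om p q : ℕ) : ℕ → RType → SType
  | o, .msg s bs =>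
      if p = s then .sel ((o + 1 : ℕ) : WithTop ℕ) (RBranches.extractSend om p q o bs)
      else if q = s then .bra ((o + 1 : ℕ) : WithTop ℕ) (RBranches.extractRecv om p q o bs)
      else .unit
  | o, .depIn r s bs =>
      if p = r then .sel ((o + 2 : ℕ) : WithTop ℕ) (RDBranches.extract om p q (o + 4) bs)
      else if q = r then .bra ((o + 2 : ℕ) : WithTop ℕ) (RDBranches.extract om p q (o + 4) bs)
      else .unit
  | o, .depOut s r bs =>
      if p = s then .sel ((o + 1 : ℕ) : WithTop ℕ) (RDBranches.extract om p q (o + 4) bs)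
      else if q = s then .bra ((o + 1 : ℕ) : WithTop ℕ) (RDBranches.extract om p q (o + 4) bs)
      else .unit
  | o, .mu x R => .mu x (RType.extract om p q o R)
  | _, .var x => .var x
  | _, .done => .unit
  | o, .skip R => RType.extract om p q (o + 4) R

def RBranches.extractSend (om p q o : ℕ) : RBranches → SBranches
  | .nil => .nil
  | .cons S R rest =>
      .cons (.tensor ((o + 2 : ℕ) : WithTop ℕ) (MType.extract om S)
              (RType.extract om p q (o + 4) R))
        (RBranches.extractSend om p q o rest)

def RBranches.extractRecv (om p q o : ℕ) : RBranches → SBranches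
  | .nil => .nil
  | .cons S R rest =>
      .cons (.par ((o + 2 : ℕ) : WithTop ℕ) (SType.dual (MType.extract om S))
              (RType.extract om p q (o + 4) R))
        (RBranches.extractRecv om p q o rest)

def RDBranches.extract (om p q o : ℕ) : RDBranches → SBranches
  | .nil => .nil
  | .cons R rest => .cons (RType.extract om p q o R) (RDBranches.extract om p q o rest)
end

end APCP

namespace APCP

/-! Auxiliary development for the duality theorem. -/

mutual
theorem SType.dual_dual : ∀ A, SType.dual (SType.dual A) = A
  | .tensor o A B => by simp [SType.dual, SType.dual_dual A, SType.dual_dual B]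
  | .par o A B => by simp [SType.dual, SType.dual_dual A, SType.dual_dual B]
  | .sel o bs => by simp [SType.dual, SBranches.dual_dual bs]
  | .bra o bs => by simp [SType.dual, SBranches.dual_dual bs]
  | .unit => by simp [SType.dual]
  | .mu x A => by simp [SType.dual, SType.dual_dual A]
  | .var x => by simp [SType.dual]

theorem SBranches.dual_dual : ∀ bs, SBranches.dual (SBranches.dual bs) = bs
  | .nil => by simp [SBranches.dual]
  | .cons A rest => by simp [SBranches.dual, SType.dual_dual A, SBranches.dual_dual rest]
end

/- The invariant guaranteed by relative projection: every subject participant in the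
relative type is `p` or `q`. -/
mutual
def RType.good (p q : ℕ) : RType → Prop
  | .msg s bs => (s = p ∨ s = q) ∧ RBranches.good p q bs
  | .depIn r _ bs => (r = p ∨ r = q) ∧ RDBranches.good p q bs
  | .depOut s _ bs => (s = p ∨ s = q) ∧ RDBranches.good p q bs
  | .mu _ R => RType.good p q R
  | .var _ => True
  | .done => True
  | .skip R => RType.good p q R

def RBranches.good (p q : ℕ) : RBranches → Prop
  | .nil => True
  | .cons _ R rest => RType.good p q R ∧ RBranches.good p q rest

def RDBranches.good (p q : ℕ) : RDBranches → Prop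
  | .nil => True
  | .cons R rest => RType.good p q R ∧ RDBranches.good p q rest
end

mutual
theorem RType.extract_dual (om p q : ℕ) (hpq : p ≠ q) :
    ∀ (o : ℕ) (R : RType), RType.good p q R →
      RType.extract om p q o R = SType.dual (RType.extract om q p o R)
  | o, .msg s bs, h => by
    obtain ⟨hs, hbs⟩ := h
    rcases hs with hs | hs
    · simp [RType.extract, hs, hpq, Ne.symm hpq, SType.dual,
        RBranches.extractSend_dual om p q hpq o bs hbs]
    · simp [RType.extract, hs, hpq, Ne.symm hpq, SType.dual,
        RBranches.extractRecv_dual om p q hpq o bs hbs]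
  | o, .depIn r s bs, h => by
    obtain ⟨hs, hbs⟩ := h
    rcases hs with hs | hs
    · simp [RType.extract, hs, hpq, Ne.symm hpq, SType.dual,
        RDBranches.extract_dual om p q hpq (o + 4) bs hbs]
    · simp [RType.extract, hs, hpq, Ne.symm hpq, SType.dual,
        RDBranches.extract_dual om p q hpq (o + 4) bs hbs]
  | o, .depOut s r bs, h => by
    obtain ⟨hs, hbs⟩ := h
    rcases hs with hs | hs
    · simp [RType.extract, hs, hpq, Ne.symm hpq, SType.dual,
        RDBranches.extract_dual om p q hpq (o + 4) bs hbs]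
    · simp [RType.extract, hs, hpq, Ne.symm hpq, SType.dual,
        RDBranches.extract_dual om p q hpq (o + 4) bs hbs]
  | o, .mu x R, h => by
    simp [RType.extract, SType.dual, RType.extract_dual om p q hpq o R h]
  | _, .var x, _ => by simp [RType.extract, SType.dual]
  | _, .done, _ => by simp [RType.extract, SType.dual]
  | o, .skip R, h => by
    simp [RType.extract, RType.extract_dual om p q hpq (o + 4) R h]

theorem RBranches.extractSend_dual (om p q : ℕ) (hpq : p ≠ q) :
    ∀ (o : ℕ) (bs : RBranches), RBranches.good p q bs →
      RBranches.extractSend om p q o bs = SBranches.dual (RBranches.extractRecv om q p o bs)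
  | o, .nil, _ => by
    simp [RBranches.extractSend, RBranches.extractRecv, SBranches.dual]
  | o, .cons S R rest, h => by
    obtain ⟨hR, hrest⟩ := h
    simp [RBranches.extractSend, RBranches.extractRecv, SBranches.dual, SType.dual,
      SType.dual_dual, RType.extract_dual om p q hpq (o + 4) R hR,
      RBranches.extractSend_dual om p q hpq o rest hrest]

theorem RBranches.extractRecv_dual (om p q : ℕ) (hpq : p ≠ q) :
    ∀ (o : ℕ) (bs : RBranches), RBranches.good p q bs →
      RBranches.extractRecv om p q o bs = SBranches.dual (RBranches.extractSend om q p o bs)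
  | o, .nil, _ => by
    simp [RBranches.extractSend, RBranches.extractRecv, SBranches.dual]
  | o, .cons S R rest, h => by
    obtain ⟨hR, hrest⟩ := h
    simp [RBranches.extractSend, RBranches.extractRecv, SBranches.dual, SType.dual,
      RType.extract_dual om p q hpq (o + 4) R hR,
      RBranches.extractRecv_dual om p q hpq o rest hrest]

theorem RDBranches.extract_dual (om p q : ℕ) (hpq : p ≠ q) :
    ∀ (o : ℕ) (bs : RDBranches), RDBranches.good p q bs →
      RDBranches.extract om p q o bs = SBranches.dual (RDBranches.extract om q p o bs)
  | o, .nil, _ => by simp [RDBranches.extract, SBranches.dual]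
  | o, .cons R rest, h => by
    obtain ⟨hR, hrest⟩ := h
    simp [RDBranches.extract, SBranches.dual,
      RType.extract_dual om p q hpq o R hR,
      RDBranches.extract_dual om p q hpq o rest hrest]
end

theorem RDBranches.good_ofList (p q : ℕ) :
    ∀ rs : List RType, (∀ R ∈ rs, RType.good p q R) → RDBranches.good p q (RDBranches.ofList rs)
  | [], _ => trivial
  | R :: rs, h => by
    refine ⟨h R (by simp), RDBranches.good_ofList p q rs ?_⟩
    intro R' hR'; exact h R' (by simp [hR'])

theorem ddep_good (p q s r : ℕ) (rs : List RType) (R : RType)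
    (hall : ∀ R' ∈ rs, RType.good p q R') (h : ddep p q s r rs = some R) :
    RType.good p q R := by
  match rs, hall with
  | [], _ => simp [ddep] at h
  | R0 :: rest, hall =>
    have hR0 : RType.good p q R0 := hall R0 (by simp)
    have hofl := RDBranches.good_ofList p q (R0 :: rest) hall
    simp only [ddep] at h
    split_ifs at h with h1 h2 h3 h4 h5 <;> injection h with h <;> subst h
    · simpa [RType.good] using hR0
    · exact show (p = p ∨ p = q) ∧ _ by simp [RType.good, hofl]
    · exact show (q = p ∨ q = q) ∧ _ by simp [RType.good, hofl]
    · exact show (p = p ∨ p = q) ∧ _ by simp [RType.good, hofl]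
    · exact show (q = p ∨ q = q) ∧ _ by simp [RType.good, hofl]

mutual
theorem GType.rproj_good (p q : ℕ) :
    ∀ (G : GType) (R : RType), GType.rproj p q G = some R → RType.good p q R
  | .comm s r bs, R, h => by
    unfold GType.rproj at h
    split at h
    · rcases hb : GBranches.rprojB p q bs with _ | rbs <;> rw [hb] at h <;> simp at h
      cases h
      exact ⟨Or.inl rfl, GBranches.rprojB_good p q bs rbs hb⟩
    · split at h
      · rcases hb : GBranches.rprojB p q bs with _ | rbs <;> rw [hb] at h <;> simp at h
        cases h
        exact ⟨Or.inr rfl, GBranches.rprojB_good p q bs rbs hb⟩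
      · rcases hb : GBranches.rprojList p q bs with _ | rs <;> rw [hb] at h <;> simp at h
        exact ddep_good p q s r rs R (GBranches.rprojList_good p q bs rs hb) h
  | .mu x G, R, h => by
    unfold GType.rproj at h
    rcases hg : GType.rproj p q G with _ | R' <;> rw [hg] at h
    · simp at h
    · have hR' := GType.rproj_good p q G R' hg
      by_cases hc : RType.contractiveOn x R' = true
      · simp only [hc, if_true] at h
        cases h; simpa [RType.good] using hR'
      · simp only [hc] at h
        rw [if_neg (by simp : ¬(false = true))] at h
        cases h; simp [RType.good]
  | .var x, R, h => by
    unfold GType.rproj at h; cases h; trivial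
  | .done, R, h => by
    unfold GType.rproj at h; cases h; trivial
  | .skip G, R, h => by
    unfold GType.rproj at h
    rcases hg : GType.rproj p q G with _ | R' <;> rw [hg] at h <;> simp at h
    cases h
    exact GType.rproj_good p q G R' hg

theorem GBranches.rprojB_good (p q : ℕ) :
    ∀ (bs : GBranches) (rbs : RBranches),
      GBranches.rprojB p q bs = some rbs → RBranches.good p q rbs
  | .nil, rbs, h => by
    unfold GBranches.rprojB at h; cases h; trivial
  | .cons S G rest, rbs, h => by
    unfold GBranches.rprojB at h
    rcases hg : GType.rproj p q G with _ | R <;>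
      rcases hr : GBranches.rprojB p q rest with _ | rs <;>
      rw [hg, hr] at h <;> simp at h
    cases h
    exact ⟨GType.rproj_good p q G R hg, GBranches.rprojB_good p q rest rs hr⟩

theorem GBranches.rprojList_good (p q : ℕ) :
    ∀ (bs : GBranches) (rs : List RType),
      GBranches.rprojList p q bs = some rs → ∀ R ∈ rs, RType.good p q R
  | .nil, rs, h => by
    unfold GBranches.rprojList at h; cases h; simp
  | .cons S G rest, rs, h => by
    unfold GBranches.rprojList at h
    rcases hg : GType.rproj p q G with _ | R <;>
      rcases hr : GBranches.rprojList p q rest with _ | rs' <;>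
      rw [hg, hr] at h <;> simp at h
    cases h
    intro R' hR'
    simp only [List.mem_cons] at hR'
    rcases hR' with rfl | hR'
    · exact GType.rproj_good p q G _ hg
    · exact GBranches.rprojList_good p q rest rs' hr R' hR'
end

/- STATEMENT 14: the session types extracted from a relative projection at the two
   opposite perspectives are dual (Theorem "relpropDual"). -/
theorem RType.extract_rproj_dual (G : GType) (hwf : GType.RWF G) (p q : ℕ)
    (hp : p ∈ GType.part G) (hq : q ∈ GType.part G) (hpq : p ≠ q)
    (o om : ℕ) (R : RType) (hR : GType.rproj p q G = some R) :
    RType.extract om p q o R = SType.dual (RType.extract om q p o R) := by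
  exact RType.extract_dual om p q hpq o R (GType.rproj_good p q G R hR)

end APCP
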